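/- Let D be a real random variable with the exponential distribution of mean d_m > 0 (i.e., rate 1/d_m), let 0 < a_0 < 1, and let c be a constant with 0 < c < 1 - a_0. Then the conditional expectation E[a_0 + D + c | a_0 + D < 1 and a_0 + D + c ≥ 1] = 1 + d_m - c/(e^{c/d_m} - 1). -/

import Mathlib

open MeasureTheory ProbabilityTheory Filter Real

lemma expPDFReal_of_nonneg {r x : ℝ} (hx : 0 ≤ x) :
    exponentialPDFReal r x = r * Real.exp (-(r * x)) := by
  rw [exponentialPDFReal, gammaPDFReal]
  simp only [rpow_one, Real.Gamma_one, div_one, sub_self, rpow_zero, mul_one, if_pos hx]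

lemma aux_deriv2 (r a0 c x : ℝ) (hr : r ≠ 0) :
    HasDerivAt (fun a ↦ -((a0 + a + c + 1/r) * Real.exp (-(r * a))))
      ((a0 + x + c) * (r * Real.exp (-(r * x)))) x := by
  have h1 : HasDerivAt (fun a : ℝ => a0 + a + c + 1/r) 1 x := by
    simpa using (((hasDerivAt_id x).const_add a0).add_const c).add_const (1/r)
  have h2 : HasDerivAt (fun a : ℝ ↦ Real.exp (-(r * a))) (-r * Real.exp (-(r * x))) x := by
    have := (((hasDerivAt_id x).const_mul (-r)).exp)
    simpa [neg_mul, mul_comm] using this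
  have h3 := (h1.mul h2).neg
  refine h3.congr_deriv ?_
  have hr1 : 1 / r * r = 1 := one_div_mul_cancel hr
  linear_combination (Real.exp (-(r * x))) * hr1

set_option maxHeartbeats 1000000 in
/-- If `D` is exponentially distributed with mean `d_m > 0`, `0 < a₀ < 1` and
`0 < c < 1 - a₀`, then
`E[a₀ + D + c | a₀ + D < 1 and a₀ + D + c ≥ 1] = 1 + d_m - c/(exp (c/d_m) - 1)`. -/
theorem stmt10 {Ω : Type*} [MeasurableSpace Ω] (μ : Measure Ω) [IsProbabilityMeasure μ]
    (dm a0 c : ℝ) (hdm : 0 < dm) (ha0 : 0 < a0) (ha1 : a0 < 1)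
    (hc0 : 0 < c) (hc1 : c < 1 - a0)
    (D : Ω → ℝ) (hDmeas : Measurable D)
    (hD : Measure.map D μ = expMeasure (1 / dm)) :
    ∫ ω, (a0 + D ω + c) ∂(μ[|{ω | a0 + D ω < 1 ∧ 1 ≤ a0 + D ω + c}])
      = 1 + dm - c / (Real.exp (c / dm) - 1) := by
  have hdm' : dm ≠ 0 := ne_of_gt hdm
  set r : ℝ := 1 / dm with hrdef
  have hr : 0 < r := by positivity
  obtain ⟨L, U, hLdef, hUdef⟩ : ∃ L U : ℝ, L = 1 - a0 - c ∧ U = 1 - a0 := ⟨_, _, rfl, rfl⟩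
  have hL : 0 < L := by rw [hLdef]; linarith
  have hLU : L < U := by rw [hLdef, hUdef]; linarith
  have hULc : U = L + c := by rw [hLdef, hUdef]; ring
  have hsets : {ω | a0 + D ω < 1 ∧ 1 ≤ a0 + D ω + c} = D ⁻¹' (Set.Ico L U) := by
    ext ω
    simp only [Set.mem_setOf_eq, Set.mem_preimage, Set.mem_Ico, hLdef, hUdef]
    constructor <;> rintro ⟨h1, h2⟩ <;> constructor <;> linarith
  have hexpwd : expMeasure r = (volume : Measure ℝ).withDensity (exponentialPDF r) := rfl
  have hcexp : Continuous (fun x : ℝ => Real.exp (-(r * x))) :=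
    Real.continuous_exp.comp (continuous_const.mul continuous_id).neg
  have hcont1 : Continuous (fun x : ℝ => r * Real.exp (-(r * x))) := continuous_const.mul hcexp
  have haff : Continuous (fun x : ℝ => a0 + x + c) :=
    (continuous_const.add continuous_id).add continuous_const
  have hcont2 : Continuous (fun x : ℝ => (a0 + x + c) * (r * Real.exp (-(r * x)))) :=
    haff.mul hcont1
  -- two interval integrals
  have hI1 : ∫ x in Set.Ico L U, r * Real.exp (-(r * x))
      = Real.exp (-(r*L)) - Real.exp (-(r*U)) := by
    rw [MeasureTheory.integral_Ico_eq_integral_Ioo, ← MeasureTheory.integral_Ioc_eq_integral_Ioo, ← intervalIntegral.integral_of_le hLU.le,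
      intervalIntegral.integral_eq_sub_of_hasDerivAt
        (fun x _ => ProbabilityTheory.hasDerivAt_neg_exp_mul_exp)
        (hcont1.intervalIntegrable L U)]
    ring
  have hI2 : ∫ x in Set.Ico L U, (a0 + x + c) * (r * Real.exp (-(r * x)))
      = (a0 + L + c + dm) * Real.exp (-(r*L)) - (a0 + U + c + dm) * Real.exp (-(r*U)) := by
    rw [MeasureTheory.integral_Ico_eq_integral_Ioo, ← MeasureTheory.integral_Ioc_eq_integral_Ioo, ← intervalIntegral.integral_of_le hLU.le,
      intervalIntegral.integral_eq_sub_of_hasDerivAt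
        (fun x _ => aux_deriv2 r a0 c x hr.ne')
        (hcont2.intervalIntegrable L U)]
    have h1r : 1 / r = dm := by rw [hrdef]; field_simp
    rw [h1r]; ring
  -- measure of the conditioning set
  have hnn : ∀ x ∈ Set.Ico L U, (0:ℝ) ≤ x := fun x hx => le_of_lt (lt_of_lt_of_le hL hx.1)
  have hμs : μ (D ⁻¹' Set.Ico L U)
      = ENNReal.ofReal (Real.exp (-(r*L)) - Real.exp (-(r*U))) := by
    rw [← Measure.map_apply hDmeas measurableSet_Ico, hD, hexpwd,
      withDensity_apply _ measurableSet_Ico]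
    have hcongr : ∫⁻ x in Set.Ico L U, exponentialPDF r x
        = ∫⁻ x in Set.Ico L U, ENNReal.ofReal (r * Real.exp (-(r*x))) := by
      refine setLIntegral_congr_fun measurableSet_Ico (fun x hx => ?_)
      rw [exponentialPDF_of_nonneg (hnn x hx)]
    rw [hcongr, ← ofReal_integral_eq_lintegral_ofReal
      (hcont1.integrableOn_Icc.mono_set Set.Ico_subset_Icc_self)
      (ae_of_all _ fun x => by positivity), hI1]
  -- the set integral
  have hInt : ∫ ω in D ⁻¹' Set.Ico L U, (a0 + D ω + c) ∂μ
      = (a0 + L + c + dm) * Real.exp (-(r*L)) - (a0 + U + c + dm) * Real.exp (-(r*U)) := by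
    have hmap : ∫ x in Set.Ico L U, (a0 + x + c) ∂(Measure.map D μ)
        = ∫ ω in D ⁻¹' Set.Ico L U, (a0 + D ω + c) ∂μ :=
      setIntegral_map (f := fun x => a0 + x + c) measurableSet_Ico
        haff.aestronglyMeasurable hDmeas.aemeasurable
    rw [← hmap, hD, hexpwd,
      show exponentialPDF r = fun x => ((exponentialPDFReal r x).toNNReal : ENNReal) from rfl,
      setIntegral_withDensity_eq_setIntegral_smul
        ((measurable_exponentialPDFReal r).real_toNNReal) _ measurableSet_Ico]
    rw [setIntegral_congr_fun measurableSet_Ico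
      (g := fun x => (a0 + x + c) * (r * Real.exp (-(r*x)))) (fun x hx => ?_), hI2]
    have hpdf : exponentialPDFReal r x = r * Real.exp (-(r*x)) := expPDFReal_of_nonneg (hnn x hx)
    rw [NNReal.smul_def, hpdf, Real.coe_toNNReal _ (by positivity), smul_eq_mul]
    ring
  -- put everything together
  rw [hsets, ProbabilityTheory.cond, integral_smul_measure, hμs, hInt]
  -- numeric computation
  have hEq : Real.exp (-(r*U)) = Real.exp (-(r*L)) * Real.exp (-(r*c)) := by
    rw [← Real.exp_add, hULc]; ring_nf
  have hcdm : c / dm = r * c := by rw [hrdef]; ring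
  set E : ℝ := Real.exp (-(r*L)) with hE
  set q : ℝ := Real.exp (-(r*c)) with hq
  have hE0 : 0 < E := Real.exp_pos _
  have hq0 : 0 < q := Real.exp_pos _
  have hq1 : q < 1 := by
    rw [hq]
    apply Real.exp_lt_one_iff.mpr
    nlinarith
  have hqinv : Real.exp (c / dm) = q⁻¹ := by
    rw [hcdm, hq, ← Real.exp_neg, neg_neg]
  have hI1pos : (0:ℝ) < E - E * q := by nlinarith
  rw [hEq, ENNReal.toReal_inv, ENNReal.toReal_ofReal (by nlinarith), smul_eq_mul, hqinv]
  have hA : a0 + L + c + dm = 1 + dm := by rw [hLdef]; ring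
  have hB : a0 + U + c + dm = 1 + dm + c := by rw [hUdef]; ring
  rw [hA, hB]
  have hd1 : E - E * q ≠ 0 := ne_of_gt hI1pos
  have hd2 : q⁻¹ - 1 ≠ 0 := by
    have : (1:ℝ) < q⁻¹ := (one_lt_inv_iff₀).mpr ⟨hq0, hq1⟩
    linarith
  have h1q : (1:ℝ) - q ≠ 0 := by linarith
  have hrw : c / (q⁻¹ - 1) = c * q / (1 - q) := by
    rw [div_eq_div_iff hd2 h1q]
    field_simp
  rw [hrw]
  field_simp
  ring
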